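/- For every real number x, sin x / x = ∏_{n=1}^∞ (1 − x²/(n²π²)) when x ≠ 0, i.e., sin x = x · ∏_{n=1}^∞ (1 − x²/(n²π²)) for all real x. -/

import Mathlib

open Filter Topology

private lemma aux_summable_log {f : ℕ → ℝ} (hf : Summable f) (h0 : ∀ n, 0 ≤ f n)
    (h1 : ∀ n, f n ≤ 1/2) : Summable fun n => Real.log (1 - f n) := by
  have key : ∀ n, |Real.log (1 - f n)| ≤ 2 * f n := by
    intro n
    have hpos : (0:ℝ) < 1 - f n := by linarith [h1 n]
    have hle1 : 1 - f n ≤ 1 := by linarith [h0 n]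
    have hlog_nonpos : Real.log (1 - f n) ≤ 0 := Real.log_nonpos (by linarith [h1 n]) hle1
    rw [abs_of_nonpos hlog_nonpos]
    have h3 := Real.log_le_sub_one_of_pos (show (0:ℝ) < (1 - f n)⁻¹ by positivity)
    rw [Real.log_inv] at h3
    have h2 : (1 - f n)⁻¹ - 1 ≤ 2 * f n := by
      have h4 : (1 - f n)⁻¹ ≤ 2 := by
        rw [inv_le_iff_one_le_mul₀ hpos]
        linarith [h1 n]
      have h5 : (1 - f n)⁻¹ - 1 = f n * (1 - f n)⁻¹ := by
        field_simp
        ring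
      rw [h5]
      calc f n * (1 - f n)⁻¹ ≤ f n * 2 := by
            exact mul_le_mul_of_nonneg_left h4 (h0 n)
        _ = 2 * f n := by ring
    linarith
  exact (((hf.mul_left 2).of_nonneg_of_le (fun n => abs_nonneg _) key)).of_abs

set_option maxHeartbeats 800000 in
theorem euler_sine_product (x : ℝ) :
    Real.sin x = x * ∏' n : ℕ, (1 - x ^ 2 / (((n : ℝ) + 1) ^ 2 * Real.pi ^ 2)) := by
  have hpi := Real.pi_pos
  set f : ℕ → ℝ := fun n => 1 - x ^ 2 / (((n : ℝ) + 1) ^ 2 * Real.pi ^ 2) with hf_def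
  set a : ℕ → ℝ := fun n => x ^ 2 / (((n : ℝ) + 1) ^ 2 * Real.pi ^ 2) with ha_def
  have ha_nonneg : ∀ n, 0 ≤ a n := fun n => by positivity
  -- find N beyond which a n ≤ 1/2
  obtain ⟨N, hN⟩ : ∃ N : ℕ, ∀ m : ℕ, N ≤ m → a m ≤ 1/2 := by
    obtain ⟨N, hN⟩ := exists_nat_gt (2 * x ^ 2 / Real.pi ^ 2)
    refine ⟨N, fun m hm => ?_⟩
    have hm' : (N:ℝ) ≤ m := Nat.cast_le.mpr hm
    rw [div_lt_iff₀ (by positivity)] at hN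
    rw [ha_def, div_le_iff₀ (by positivity)]
    nlinarith [sq_nonneg ((m:ℝ)), sq_nonneg ((N:ℝ))]
  -- summability of a (shifted)
  have hsum_a : Summable fun n : ℕ => a (n + N) := by
    have h1 : Summable (fun n : ℕ => 1 / ((n:ℝ) + 1) ^ 2) := by
      have := Real.summable_one_div_nat_pow.mpr (show 1 < 2 by norm_num)
      exact (summable_nat_add_iff 1).mpr this |>.congr (by intro n; push_cast; ring_nf)
    have h2 : Summable (fun n : ℕ => x ^ 2 / Real.pi ^ 2 * (1 / ((n:ℝ) + 1) ^ 2)) :=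
      h1.mul_left _
    refine ((summable_nat_add_iff N).mpr ?_)
    apply h2.congr
    intro n
    rw [ha_def]
    rw [eq_div_iff (by positivity)]
    field_simp
  -- multipliability of shifted f
  have hmult_shift : Multipliable fun n : ℕ => f (n + N) := by
    have hpos : ∀ n : ℕ, 0 < f (n + N) := by
      intro n
      have := hN (n + N) (Nat.le_add_left N n)
      simp only [hf_def]
      have : a (n + N) ≤ 1/2 := this
      simp only [ha_def] at this
      push_cast at this ⊢
      linarith
    have hslog : Summable fun n : ℕ => Real.log (f (n + N)) := by
      have := aux_summable_log hsum_a (fun n => ha_nonneg _)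
        (fun n => hN (n + N) (Nat.le_add_left N n))
      apply this.congr
      intro n
      simp only [hf_def, ha_def]
    exact Real.multipliable_of_summable_log hpos hslog
  have hmult : Multipliable f := by
    have hfin : Multipliable (f ∘ (↑) : ((Finset.range N : Set ℕ)) → ℝ) := by
      have : Finite ((Finset.range N : Set ℕ)) := Finset.finite_toSet _
      exact Multipliable.of_finite
    have hcompl : Multipliable (f ∘ (↑) : ((Finset.range N : Set ℕ)ᶜ : Set ℕ) → ℝ) := by
      have he : Multipliable ((f ∘ (↑) : { n // n ∉ Finset.range N } → ℝ) ∘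
          (notMemRangeEquiv N).symm) := by
        apply hmult_shift.congr
        intro n
        simp [Function.comp, coe_notMemRangeEquiv_symm]
      exact ((notMemRangeEquiv N).symm.multipliable_iff).mp he
    exact hfin.mul_compl hcompl
  -- tendsto of partial products
  have htend : Tendsto (fun n : ℕ => x * ∏ j ∈ Finset.range n, f j) atTop (𝓝 (Real.sin x)) := by
    have h := Real.tendsto_euler_sin_prod (x / Real.pi)
    have heq : ∀ n : ℕ, Real.pi * (x / Real.pi) *
        ∏ j ∈ Finset.range n, (1 - (x / Real.pi) ^ 2 / ((j : ℝ) + 1) ^ 2)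
        = x * ∏ j ∈ Finset.range n, f j := by
      intro n
      congr 1
      · rw [mul_comm, div_mul_cancel₀ x hpi.ne']
      · apply Finset.prod_congr rfl
        intro j _
        simp only [hf_def]
        rw [div_pow, div_div, mul_comm]
    have hsin : Real.sin (Real.pi * (x / Real.pi)) = Real.sin x := by
      rw [mul_comm, div_mul_cancel₀ x hpi.ne']
    rw [hsin] at h
    exact h.congr heq
  rcases eq_or_ne x 0 with hx | hx
  · subst hx
    simp
  · have h1 : Tendsto (fun n : ℕ => ∏ j ∈ Finset.range n, f j) atTop (𝓝 (∏' n, f n)) :=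
      hmult.hasProd_iff_tendsto_nat.mp hmult.hasProd
    have h2 : Tendsto (fun n : ℕ => x * ∏ j ∈ Finset.range n, f j) atTop
        (𝓝 (x * ∏' n, f n)) := h1.const_mul x
    exact tendsto_nhds_unique htend h2
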